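/- Let R = ℂ[s^{±1}, t^{±1}] be the ring of complex Laurent polynomials in two variables, let Ω_{R/ℂ} be its module of Kähler differentials with universal derivation d : R → Ω_{R/ℂ}, and let dR denote the ℂ-subspace of exact forms (the image of d). Then the cosets in the quotient ℂ-vector space Ω_{R/ℂ}/dR of the elements s^{-1}ds, of s^{m-1}t^{n}ds for all m ∈ ℤ and all n ∈ ℤ with n ≠ 0, and of s^{m}t^{-1}dt for all m ∈ ℤ, together form a ℂ-basis of Ω_{R/ℂ}/dR. -/

import Mathlib

/-
STATEMENT 0: R = ℂ[s^{±1}, t^{±1}] (realized as the group algebra of ℤ² over ℂ),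
Ω_{R/ℂ} its module of Kähler differentials with universal derivation d, and dR the
ℂ-subspace of exact forms.  The cosets in Ω_{R/ℂ}/dR of s⁻¹ds, of s^{m-1}tⁿds
(m ∈ ℤ, n ∈ ℤ, n ≠ 0) and of s^m t⁻¹dt (m ∈ ℤ) form a ℂ-basis of Ω_{R/ℂ}/dR.
-/

noncomputable section

/-- The ring of complex Laurent polynomials in two variables `s`, `t`. -/
abbrev R2 : Type := AddMonoidAlgebra ℂ (ℤ × ℤ)

/-- The monomial `s^a t^b`. -/
def mono (a b : ℤ) : R2 := AddMonoidAlgebra.single (a, b) 1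

/-- The ℂ-subspace `dR ⊆ Ω_{R/ℂ}` of exact forms, the image of the universal
derivation `d : R → Ω_{R/ℂ}`. -/
def dR : Submodule ℂ (KaehlerDifferential ℂ R2) :=
  LinearMap.range (KaehlerDifferential.D ℂ R2).toLinearMap

/-- The quotient ℂ-vector space `Ω_{R/ℂ}/dR`. -/
abbrev Quot2 := KaehlerDifferential ℂ R2 ⧸ dR

/-- `ds`. -/
def ds : KaehlerDifferential ℂ R2 := KaehlerDifferential.D ℂ R2 (mono 1 0)

/-- `dt`. -/
def dt : KaehlerDifferential ℂ R2 := KaehlerDifferential.D ℂ R2 (mono 0 1)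

/-- The family of cosets: `s⁻¹ds`; `s^{m-1}tⁿds` for `m, n ∈ ℤ`, `n ≠ 0`;
and `s^m t⁻¹ dt` for `m ∈ ℤ`. -/
def basisFamily : Unit ⊕ {p : ℤ × ℤ // p.2 ≠ 0} ⊕ ℤ → Quot2
  | Sum.inl _ => Submodule.Quotient.mk (mono (-1) 0 • ds)
  | Sum.inr (Sum.inl ⟨(m, n), _⟩) => Submodule.Quotient.mk (mono (m - 1) n • ds)
  | Sum.inr (Sum.inr m) => Submodule.Quotient.mk (mono m (-1) • dt)

/-! ### Auxiliary development -/

lemma mono_mul (a b c d : ℤ) : mono a b * mono c d = mono (a + c) (b + d) := by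
  simp [mono, AddMonoidAlgebra.single_mul_single, Prod.mk_add_mk]

lemma mono_zero_zero : mono 0 0 = 1 := rfl

/-- The target module of the concrete derivation. -/
abbrev M2 : Type := R2 × R2

/-- `dfun p` models `d(s^{p₁} t^{p₂}) = p₁ s^{p₁-1}t^{p₂} ds + p₂ s^{p₁}t^{p₂-1} dt`. -/
def dfun (p : ℤ × ℤ) : M2 :=
  (AddMonoidAlgebra.single (p.1 - 1, p.2) (p.1 : ℂ),
   AddMonoidAlgebra.single (p.1, p.2 - 1) (p.2 : ℂ))

def D0lin : R2 →ₗ[ℂ] M2 :=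
  (Finsupp.lsum ℂ fun p => LinearMap.toSpanSingleton ℂ M2 (dfun p)) ∘ₗ
    (AddMonoidAlgebra.coeffLinearEquiv ℂ).toLinearMap

lemma D0lin_single (p : ℤ × ℤ) (c : ℂ) :
    D0lin (AddMonoidAlgebra.single p c) = c • dfun p := by
  rw [D0lin, LinearMap.comp_apply]
  erw [Finsupp.lsum_single]
  rfl

lemma single_single_case (p q : ℤ × ℤ) (c e : ℂ) :
    D0lin (AddMonoidAlgebra.single p c * AddMonoidAlgebra.single q e)
      = AddMonoidAlgebra.single p c • D0lin (AddMonoidAlgebra.single q e)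
        + AddMonoidAlgebra.single q e • D0lin (AddMonoidAlgebra.single p c) := by
  rw [AddMonoidAlgebra.single_mul_single, D0lin_single, D0lin_single, D0lin_single]
  have h1 : p + (q.1 - 1, q.2) = (p.1 + q.1 - 1, p.2 + q.2) := by
    cases p; cases q; simp [Prod.ext_iff]; omega
  have h2 : p + (q.1, q.2 - 1) = (p.1 + q.1, p.2 + q.2 - 1) := by
    cases p; cases q; simp [Prod.ext_iff]; omega
  have h3 : q + (p.1 - 1, p.2) = (p.1 + q.1 - 1, p.2 + q.2) := by
    cases p; cases q; simp [Prod.ext_iff]; omega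
  have h4 : q + (p.1, p.2 - 1) = (p.1 + q.1, p.2 + q.2 - 1) := by
    cases p; cases q; simp [Prod.ext_iff]; omega
  refine Prod.ext ?_ ?_ <;>
  · simp only [dfun, Prod.smul_fst, Prod.fst_add, Prod.smul_snd, Prod.snd_add, smul_eq_mul,
      mul_smul_comm, AddMonoidAlgebra.single_mul_single,
      h1, h2, h3, h4, Prod.fst_add, Prod.snd_add]
    rw [AddMonoidAlgebra.smul_single, AddMonoidAlgebra.smul_single, AddMonoidAlgebra.smul_single,
      ← AddMonoidAlgebra.single_add]
    congr 1
    simp only [smul_eq_mul]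
    push_cast
    ring

lemma D0lin_mul (a b : R2) : D0lin (a * b) = a • D0lin b + b • D0lin a := by
  induction a using AddMonoidAlgebra.induction_linear with
  | zero => simp
  | add f g hf hg =>
    rw [add_mul, map_add, hf, hg, map_add]
    module
  | single p c =>
    induction b using AddMonoidAlgebra.induction_linear with
    | zero => simp
    | add f g hf hg =>
      rw [mul_add, map_add, hf, hg, map_add]
      module
    | single q e => exact single_single_case p q c e

/-- The concrete derivation `R2 → R2 × R2`. -/
def D0 : Derivation ℂ R2 M2 :=
  { toLinearMap := D0lin
    map_one_eq_zero' := by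
      have : (1 : R2) = AddMonoidAlgebra.single (0, 0) 1 := rfl
      rw [this, D0lin_single]
      simp [dfun]
    leibniz' := D0lin_mul }

/-! ### The formula for `d(mono a b)` -/

def dlog (p : ℤ × ℤ) : KaehlerDifferential ℂ R2 :=
  mono (-p.1) (-p.2) • (KaehlerDifferential.D ℂ R2 (mono p.1 p.2))

lemma dlog_add (p q : ℤ × ℤ) : dlog (p + q) = dlog p + dlog q := by
  have h : mono (p + q).1 (p + q).2 = mono p.1 p.2 * mono q.1 q.2 := by
    rw [mono_mul]; rfl
  unfold dlog
  rw [h, Derivation.leibniz, smul_add, smul_smul, smul_smul, mono_mul, mono_mul]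
  simp only [Prod.fst_add, Prod.snd_add]
  have e1 : -(p.1 + q.1) + p.1 = -q.1 := by ring
  have e2 : -(p.2 + q.2) + p.2 = -q.2 := by ring
  have e3 : -(p.1 + q.1) + q.1 = -p.1 := by ring
  have e4 : -(p.2 + q.2) + q.2 = -p.2 := by ring
  rw [e1, e2, e3, e4, add_comm]

def dlogHom : (ℤ × ℤ) →+ KaehlerDifferential ℂ R2 := AddMonoidHom.mk' dlog dlog_add

lemma dlog_eq (p : ℤ × ℤ) :
    dlog p = p.1 • dlog (1, 0) + p.2 • dlog (0, 1) := by
  have hp : p = p.1 • ((1, 0) : ℤ × ℤ) + p.2 • ((0, 1) : ℤ × ℤ) := by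
    cases p with
    | mk a b => simp [Prod.ext_iff]
  conv_lhs => rw [show dlog p = dlogHom p from rfl, hp, map_add, map_zsmul, map_zsmul]
  rfl

lemma dlog_s : dlog (1, 0) = mono (-1) 0 • ds := by
  unfold dlog ds
  norm_num

lemma dlog_t : dlog (0, 1) = mono 0 (-1) • dt := by
  unfold dlog dt
  norm_num

lemma D_mono (a b : ℤ) :
    (KaehlerDifferential.D ℂ R2) (mono a b)
      = (a : ℂ) • (mono (a - 1) b • ds) + (b : ℂ) • (mono a (b - 1) • dt) := by
  have h0 : (KaehlerDifferential.D ℂ R2) (mono a b) = mono a b • dlog (a, b) := by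
    unfold dlog
    rw [smul_smul, mono_mul]
    norm_num [mono_zero_zero]
  rw [h0, dlog_eq]
  have hfst : ((a, b) : ℤ × ℤ).1 = a := rfl
  have hsnd : ((a, b) : ℤ × ℤ).2 = b := rfl
  rw [hfst, hsnd, dlog_s, dlog_t, smul_add,
    smul_comm (mono a b) a, smul_comm (mono a b) b, smul_smul, smul_smul,
    mono_mul, mono_mul]
  have e1 : a + -1 = a - 1 := by ring
  have e2 : b + -1 = b - 1 := by ring
  have e3 : a + 0 = a := by ring
  have e4 : b + 0 = b := by ring
  rw [e1, e2, e3, e4, Int.cast_smul_eq_zsmul ℂ a, Int.cast_smul_eq_zsmul ℂ b]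

/-! ### Linear functionals separating the family -/

abbrev Idx : Type := Unit ⊕ {p : ℤ × ℤ // p.2 ≠ 0} ⊕ ℤ
abbrev W : Type := Idx →₀ ℂ

def w1 (x y : ℤ) : W :=
  if h : y ≠ 0 then Finsupp.single (Sum.inr (Sum.inl ⟨(x + 1, y), h⟩)) 1
  else if x = -1 then Finsupp.single (Sum.inl ()) 1 else 0

def w2 (x y : ℤ) : W :=
  if h : y + 1 ≠ 0 then
    (-(x : ℂ) / ((y : ℂ) + 1)) • Finsupp.single (Sum.inr (Sum.inl ⟨(x, y + 1), h⟩)) 1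
  else Finsupp.single (Sum.inr (Sum.inr x)) 1

def L1 : R2 →ₗ[ℂ] W := (Finsupp.lsum ℂ fun (p : ℤ × ℤ) => LinearMap.toSpanSingleton ℂ W (w1 p.1 p.2)) ∘ₗ
  (AddMonoidAlgebra.coeffLinearEquiv ℂ).toLinearMap
def L2 : R2 →ₗ[ℂ] W := (Finsupp.lsum ℂ fun (p : ℤ × ℤ) => LinearMap.toSpanSingleton ℂ W (w2 p.1 p.2)) ∘ₗ
  (AddMonoidAlgebra.coeffLinearEquiv ℂ).toLinearMap

lemma L1_single (p : ℤ × ℤ) (c : ℂ) : L1 (AddMonoidAlgebra.single p c) = c • w1 p.1 p.2 := by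
  rw [L1, LinearMap.comp_apply]; erw [Finsupp.lsum_single]; rfl

lemma L2_single (p : ℤ × ℤ) (c : ℂ) : L2 (AddMonoidAlgebra.single p c) = c • w2 p.1 p.2 := by
  rw [L2, LinearMap.comp_apply]; erw [Finsupp.lsum_single]; rfl

def L : M2 →ₗ[ℂ] W := L1 ∘ₗ LinearMap.fst ℂ R2 R2 + L2 ∘ₗ LinearMap.snd ℂ R2 R2

lemma L_pair (x y : R2) : L (x, y) = L1 x + L2 y := rfl

def phi : KaehlerDifferential ℂ R2 →ₗ[R2] M2 := D0.liftKaehlerDifferential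

def Lphi : KaehlerDifferential ℂ R2 →ₗ[ℂ] W := L ∘ₗ (phi.restrictScalars ℂ)

lemma Lphi_D (r : R2) : Lphi (KaehlerDifferential.D ℂ R2 r) = L (D0lin r) := by
  have : phi (KaehlerDifferential.D ℂ R2 r) = D0 r :=
    Derivation.liftKaehlerDifferential_comp_D D0 r
  simp only [Lphi, LinearMap.comp_apply, LinearMap.restrictScalars_apply]
  rw [this]
  rfl

lemma L_D0_zero (r : R2) : L (D0lin r) = 0 := by
  induction r using AddMonoidAlgebra.induction_linear with
  | zero => simp
  | add f g hf hg => rw [map_add, map_add, hf, hg, add_zero]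
  | single p c =>
    rw [D0lin_single,
      map_smul]
    have hL : L (dfun p) = (p.1 : ℂ) • w1 (p.1 - 1) p.2 + (p.2 : ℂ) • w2 p.1 (p.2 - 1) := by
      rw [dfun, L_pair, L1_single, L2_single]
    rw [hL]
    by_cases h2 : p.2 = 0
    · rcases eq_or_ne p.1 0 with h1 | h1
      · simp [h2, h1]
      · have hw : w1 (p.1 - 1) p.2 = 0 := by
          rw [w1, dif_neg (by simp [h2]), if_neg (by omega)]
        rw [h2] at hw ⊢
        simp [hw]
    · have e : p.1 - 1 + 1 = p.1 := by omega
      have hw1 : w1 (p.1 - 1) p.2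
          = Finsupp.single (Sum.inr (Sum.inl ⟨(p.1, p.2), h2⟩)) 1 := by
        rw [w1, dif_pos h2]
        simp only [e]
      have hc : p.2 - 1 + 1 ≠ 0 := by omega
      have e2 : p.2 - 1 + 1 = p.2 := by omega
      have hw2 : w2 p.1 (p.2 - 1)
          = (-(p.1 : ℂ) / (p.2 : ℂ)) • Finsupp.single (Sum.inr (Sum.inl ⟨(p.1, p.2), h2⟩)) 1 := by
        rw [w2, dif_pos hc]
        congr 2
        · push_cast
          ring_nf
        · simp only [e2]
      have hp2 : (p.2 : ℂ) ≠ 0 := Int.cast_ne_zero.mpr h2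
      rw [hw1, hw2, smul_smul, ← add_smul]
      have hcoeff : (p.1 : ℂ) + (p.2 : ℂ) * (-(p.1 : ℂ) / (p.2 : ℂ)) = 0 := by
        field_simp
        ring
      rw [hcoeff, zero_smul, smul_zero]

lemma dR_le_ker : dR ≤ LinearMap.ker Lphi := by
  rintro x ⟨r, rfl⟩
  simp only [LinearMap.mem_ker]
  exact (Lphi_D r).trans (L_D0_zero r)

def Lbar : Quot2 →ₗ[ℂ] W := Submodule.liftQ dR Lphi dR_le_ker

lemma Lphi_mono_ds (a b : ℤ) : Lphi (mono a b • ds) = w1 a b := by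
  have h1 : phi ds = ((1 : R2), (0 : R2)) := by
    rw [ds, phi, Derivation.liftKaehlerDifferential_comp_D]
    show D0lin (mono 1 0) = _
    rw [mono, D0lin_single, dfun, one_smul]
    simp [AddMonoidAlgebra.one_def]
    rfl
  have : Lphi (mono a b • ds) = L (mono a b • phi ds) := by
    simp only [Lphi, LinearMap.comp_apply, LinearMap.restrictScalars_apply, map_smul]
  rw [this, h1]
  have h2 : mono a b • ((1 : R2), (0 : R2)) = ((mono a b, 0) : M2) := by
    simp [Prod.smul_mk, smul_eq_mul]
  rw [h2, L_pair, map_zero, add_zero, mono, L1_single, one_smul]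

lemma Lphi_mono_dt (a b : ℤ) : Lphi (mono a b • dt) = w2 a b := by
  have h1 : phi dt = ((0 : R2), (1 : R2)) := by
    rw [dt, phi, Derivation.liftKaehlerDifferential_comp_D]
    show D0lin (mono 0 1) = _
    rw [mono, D0lin_single, dfun, one_smul]
    simp [AddMonoidAlgebra.one_def]
    rfl
  have : Lphi (mono a b • dt) = L (mono a b • phi dt) := by
    simp only [Lphi, LinearMap.comp_apply, LinearMap.restrictScalars_apply, map_smul]
  rw [this, h1]
  have h2 : mono a b • ((0 : R2), (1 : R2)) = ((0, mono a b) : M2) := by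
    simp [Prod.smul_mk, smul_eq_mul]
  rw [h2, L_pair, map_zero, zero_add, mono, L2_single, one_smul]

lemma Lbar_comp : ∀ i, Lbar (basisFamily i) = Finsupp.single i (1 : ℂ)
  | Sum.inl u => by
    show Lbar (Submodule.Quotient.mk (mono (-1) 0 • ds)) = _
    rw [Lbar, Submodule.liftQ_apply, Lphi_mono_ds, w1, dif_neg (by simp), if_pos rfl]
  | Sum.inr (Sum.inl ⟨(m, n), hn⟩) => by
    show Lbar (Submodule.Quotient.mk (mono (m - 1) n • ds)) = _
    rw [Lbar, Submodule.liftQ_apply, Lphi_mono_ds, w1, dif_pos hn]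
    have e : m - 1 + 1 = m := by omega
    simp only [e]
  | Sum.inr (Sum.inr m) => by
    show Lbar (Submodule.Quotient.mk (mono m (-1) • dt)) = _
    rw [Lbar, Submodule.liftQ_apply, Lphi_mono_dt, w2, dif_neg (by norm_num)]

/-! ### Spanning -/

lemma rel (a b : ℤ) :
    (a : ℂ) • (Submodule.Quotient.mk (mono (a - 1) b • ds) : Quot2)
      + (b : ℂ) • (Submodule.Quotient.mk (mono a (b - 1) • dt) : Quot2) = 0 := by
  have h : (Submodule.Quotient.mk (KaehlerDifferential.D ℂ R2 (mono a b)) : Quot2) = 0 :=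
    (Submodule.Quotient.mk_eq_zero _).2 ⟨mono a b, rfl⟩
  rw [D_mono] at h
  simpa [Submodule.Quotient.mk_add, Submodule.Quotient.mk_smul] using h

lemma mk_ds_mem (a b : ℤ) : (Submodule.Quotient.mk (mono a b • ds) : Quot2)
    ∈ Submodule.span ℂ (Set.range basisFamily) := by
  by_cases hb : b = 0
  · subst hb
    by_cases ha : a = -1
    · subst ha
      exact Submodule.subset_span ⟨Sum.inl (), rfl⟩
    · have h := rel (a + 1) 0
      have e : a + 1 - 1 = a := by ring
      rw [e] at h
      simp only [Int.cast_zero, zero_smul, add_zero] at h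
      have hne : ((a + 1 : ℤ) : ℂ) ≠ 0 := Int.cast_ne_zero.mpr (by omega)
      have h' : (Submodule.Quotient.mk (mono a 0 • ds) : Quot2) = 0 := by
        rw [← inv_smul_smul₀ hne (Submodule.Quotient.mk (mono a 0 • ds) : Quot2), h, smul_zero]
      rw [h']
      exact zero_mem _
  · have h : basisFamily (Sum.inr (Sum.inl ⟨(a + 1, b), hb⟩))
        = Submodule.Quotient.mk (mono a b • ds) := by
      show Submodule.Quotient.mk (mono (a + 1 - 1) b • ds) = _
      norm_num
    rw [← h]
    exact Submodule.subset_span (Set.mem_range_self _)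

lemma mk_dt_mem (a b : ℤ) : (Submodule.Quotient.mk (mono a b • dt) : Quot2)
    ∈ Submodule.span ℂ (Set.range basisFamily) := by
  by_cases hb : b = -1
  · subst hb
    exact Submodule.subset_span ⟨Sum.inr (Sum.inr a), rfl⟩
  · have h := rel a (b + 1)
    have e : b + 1 - 1 = b := by ring
    rw [e] at h
    have hne : ((b + 1 : ℤ) : ℂ) ≠ 0 := Int.cast_ne_zero.mpr (by omega)
    have h4 : ((b + 1 : ℤ) : ℂ) • (Submodule.Quotient.mk (mono a b • dt) : Quot2)
        = (-(a : ℂ)) • Submodule.Quotient.mk (mono (a - 1) (b + 1) • ds) := by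
      rw [add_comm] at h
      have h5 := eq_neg_of_add_eq_zero_left h
      rw [h5, ← neg_smul]
    have h3 : (Submodule.Quotient.mk (mono a b • dt) : Quot2)
        = (((b + 1 : ℤ) : ℂ))⁻¹ • ((-(a : ℂ)) • Submodule.Quotient.mk (mono (a - 1) (b + 1) • ds)) := by
      rw [← h4, inv_smul_smul₀ hne]
    rw [h3]
    exact Submodule.smul_mem _ _ (Submodule.smul_mem _ _ (mk_ds_mem _ _))

def gens : Set (KaehlerDifferential ℂ R2) :=
  {x | ∃ a b : ℤ, x = mono a b • ds ∨ x = mono a b • dt}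

lemma single_eq_smul_mono (p : ℤ × ℤ) (c : ℂ) :
    (AddMonoidAlgebra.single p c : R2) = c • mono p.1 p.2 := by
  rw [mono, AddMonoidAlgebra.smul_single, smul_eq_mul, mul_one]

lemma mono_smul_span (c d : ℤ) {x : KaehlerDifferential ℂ R2}
    (hx : x ∈ Submodule.span ℂ gens) : mono c d • x ∈ Submodule.span ℂ gens := by
  refine Submodule.span_induction (p := fun x _ => mono c d • x ∈ Submodule.span ℂ gens)
    ?_ ?_ ?_ ?_ hx
  · rintro x ⟨a, b, (rfl | rfl)⟩
    · exact Submodule.subset_span ⟨c + a, d + b, Or.inl (by rw [smul_smul, mono_mul])⟩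
    · exact Submodule.subset_span ⟨c + a, d + b, Or.inr (by rw [smul_smul, mono_mul])⟩
  · simp
  · intro x y _ _ hx hy
    rw [smul_add]
    exact add_mem hx hy
  · intro r x _ hx
    rw [smul_comm]
    exact Submodule.smul_mem _ _ hx

lemma r_smul_span (r : R2) {x : KaehlerDifferential ℂ R2}
    (hx : x ∈ Submodule.span ℂ gens) : r • x ∈ Submodule.span ℂ gens := by
  induction r using AddMonoidAlgebra.induction_linear with
  | zero => rw [zero_smul]; exact zero_mem _
  | add f g hf hg => rw [add_smul]; exact add_mem hf hg
  | single p c =>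
    rw [single_eq_smul_mono, smul_assoc]
    exact Submodule.smul_mem _ _ (mono_smul_span p.1 p.2 hx)

lemma D_mem_span (r : R2) : KaehlerDifferential.D ℂ R2 r ∈ Submodule.span ℂ gens := by
  induction r using AddMonoidAlgebra.induction_linear with
  | zero => simp
  | add f g hf hg => rw [map_add]; exact add_mem hf hg
  | single p c =>
    rw [single_eq_smul_mono, Derivation.map_smul, D_mono]
    refine Submodule.smul_mem _ _ (add_mem (Submodule.smul_mem _ _ ?_) (Submodule.smul_mem _ _ ?_))
    · exact Submodule.subset_span ⟨p.1 - 1, p.2, Or.inl rfl⟩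
    · exact Submodule.subset_span ⟨p.1, p.2 - 1, Or.inr rfl⟩

lemma span_gens_top : Submodule.span ℂ gens = ⊤ := by
  rw [eq_top_iff]
  intro x _
  have hx : x ∈ Submodule.span R2 (Set.range (KaehlerDifferential.D ℂ R2)) := by
    rw [KaehlerDifferential.span_range_derivation]; trivial
  refine Submodule.span_induction (p := fun x _ => x ∈ Submodule.span ℂ gens)
    ?_ ?_ ?_ ?_ hx
  · rintro y ⟨r, rfl⟩
    exact D_mem_span r
  · exact zero_mem _
  · intro u v _ _ hu hv
    exact add_mem hu hv
  · intro r u _ hu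
    exact r_smul_span r hu

lemma span_basis_top : Submodule.span ℂ (Set.range basisFamily) = ⊤ := by
  rw [eq_top_iff]
  have h1 : (⊤ : Submodule ℂ Quot2) = Submodule.map dR.mkQ ⊤ := by
    rw [Submodule.map_top, Submodule.range_mkQ]
  rw [h1, ← span_gens_top, Submodule.map_span, Submodule.span_le]
  rintro y ⟨x, ⟨a, b, (rfl | rfl)⟩, rfl⟩
  · simpa only [Submodule.mkQ_apply, SetLike.mem_coe] using mk_ds_mem a b
  · simpa only [Submodule.mkQ_apply, SetLike.mem_coe] using mk_dt_mem a b

theorem stmt0 :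
    LinearIndependent ℂ basisFamily ∧
    Submodule.span ℂ (Set.range basisFamily) = ⊤ := by
  constructor
  · have hcomp : Lbar ∘ basisFamily = fun i => Finsupp.single i (1 : ℂ) :=
      funext Lbar_comp
    have hli : LinearIndependent ℂ (fun i : Idx => Finsupp.single i (1 : ℂ)) := by
      have h := (Finsupp.basisSingleOne (R := ℂ) (ι := Idx)).linearIndependent
      rwa [Finsupp.coe_basisSingleOne] at h
    exact LinearIndependent.of_comp Lbar (hcomp ▸ hli)
  · exact span_basis_top
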